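/- In a deterministic game, if the subset construction P(G) contains a strongly connected component with an accepting set U ⊆ T, then from every state q ∈ U player 1 has a pure counting strategy that is sure (hence almost-sure) winning for weakly synchronizing in T. -/
import Mathlib


open Finset

/-- The successor operator of the subset construction of a deterministic game
`δ : Q → A → A → Q` under a selector `α : Q → A`:
`δ_α(s) = { δ q (α q) b | q ∈ s, b ∈ A }`. -/
def detPostF {Q A : Type} [Fintype A] [DecidableEq Q]
    (δ : Q → A → A → Q) (α : Q → A) (s : Finset Q) : Finset Q :=
  (s ×ˢ (Finset.univ : Finset A)).image (fun x => δ x.1 (α x.1) x.2)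

/-- Set of states reachable at round `i` from `q0` when player 1 plays the pure
counting strategy `σ : ℕ → Q → A` (against all behaviours of player 2). -/
def reachSet {Q A : Type} [Fintype A] [DecidableEq Q]
    (δ : Q → A → A → Q) (σ : ℕ → Q → A) (q0 : Q) : ℕ → Finset Q
  | 0 => {q0}
  | i + 1 => detPostF δ (σ i) (reachSet δ σ q0 i)

/-- `𝒞` is a strongly connected component of the subset construction: a set of
nonempty vertices, any two of which are connected by a nonempty path of
selector-steps. -/
def IsSCC {Q A : Type} [Fintype A] [DecidableEq Q]
    (δ : Q → A → A → Q) (𝒞 : Set (Finset Q)) : Prop :=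
  𝒞.Nonempty ∧ (∀ s ∈ 𝒞, s.Nonempty) ∧
  ∀ s ∈ 𝒞, ∀ s' ∈ 𝒞, ∃ (k : ℕ) (path : ℕ → Finset Q),
    1 ≤ k ∧ path 0 = s ∧ path k = s' ∧
    ∀ i < k, ∃ α : Q → A, path (i + 1) = detPostF δ α (path i)

/-- in a deterministic game, if the subset construction contains a
strongly connected component with an accepting set `U ⊆ T`, then from every state
`q ∈ U` player 1 has a pure counting strategy that is sure winning for weakly
synchronizing in `T`: at infinitely many rounds, every state reachable under the
strategy (hence the entire probability mass) lies in `T`. -/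
lemma detPostF_mono {Q A : Type} [Fintype A] [DecidableEq Q]
    (δ : Q → A → A → Q) (α : Q → A) {s s' : Finset Q} (h : s ⊆ s') :
    detPostF δ α s ⊆ detPostF δ α s' :=
  Finset.image_subset_image (Finset.product_subset_product_left h)

theorem scc_accepting_sure_weakly {Q A : Type} [Fintype Q] [Fintype A] [DecidableEq Q]
    (δ : Q → A → A → Q) (T : Finset Q) (𝒞 : Set (Finset Q))
    (hSCC : IsSCC δ 𝒞) (U : Finset Q) (hU : U ∈ 𝒞) (hUT : U ⊆ T) :
    ∀ q ∈ U, ∃ σ : ℕ → Q → A,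
      ∀ N : ℕ, ∃ i, N ≤ i ∧ reachSet δ σ q i ⊆ T := by
  intro q hq
  obtain ⟨-, -, hconn⟩ := hSCC
  obtain ⟨k, path, hk, h0, hkU, hstep⟩ := hconn U hU U hU
  choose α hα using fun i (h : i < k) => hstep i h
  have hkpos : 0 < k := hk
  set σ : ℕ → Q → A := fun n => α (n % k) (Nat.mod_lt n hkpos) with hσ
  refine ⟨σ, ?_⟩
  have key : ∀ i, reachSet δ σ q i ⊆ path (i % k) := by
    intro i
    induction i with
    | zero =>
      simp only [reachSet, Nat.zero_mod, h0]
      exact Finset.singleton_subset_iff.mpr hq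
    | succ i ih =>
      have hsub : reachSet δ σ q (i + 1) ⊆ path (i % k + 1) := by
        rw [hα (i % k) (Nat.mod_lt i hkpos)]
        exact detPostF_mono δ _ ih
      have hdecomp : i + 1 = (i % k + 1) + k * (i / k) := by
        have := Nat.mod_add_div i k; omega
      have hmod : (i + 1) % k = (i % k + 1) % k := by
        rw [hdecomp, Nat.add_mul_mod_self_left]
      rcases Nat.lt_or_ge (i % k + 1) k with hlt | hge
      · rwa [hmod, Nat.mod_eq_of_lt hlt]
      · have heq : i % k + 1 = k := le_antisymm (Nat.mod_lt i hkpos) hge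
        rw [hmod, heq, Nat.mod_self, h0, ← hkU, ← heq]
        exact hsub
  intro N
  refine ⟨N * k, Nat.le_mul_of_pos_right N hkpos, ?_⟩
  refine (key (N * k)).trans ?_
  rw [Nat.mul_mod_left, h0]
  exact hUT
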